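/- arXiv:math/9912030 — 12 statements merged into one kernel-verified Lean document; each statement's English description precedes it below -/
import Mathlib

section
/- The separation of variables given by an induced division is an involutive division. Precisely: for a fixed admissible monomial ordering ≺ on monomials in n variables, define for each finite set U of monomials and u ∈ U the multiplicative monoid L_≺(u,U) generated by those variables x_i such that there is no v ∈ U with v ≺ u and deg_i(u) < deg_i(v). Then L_≺ satisfies the four axioms of an involutive division: (a) if w ∈ L_≺(u,U) and v | w then v ∈ L_≺(u,U); (b) if u,v ∈ U and uL_≺(u,U) ∩ vL_≺(v,U) ≠ ∅ then u ∈ vL_≺(v,U) or v ∈ uL_≺(u,U); (c) if v ∈ U and v ∈ uL_≺(u,U) then L_≺(v,U) ⊆ L_≺(u,U); (d) if V ⊆ U then L_≺(u,U) ⊆ L_≺(u,V) for all u ∈ V. -/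
/-- An admissible monomial ordering on monomials in `n` variables,
identified with exponent vectors in `ℕ^n`. -/
structure AdmissibleOrder (n : ℕ) where
  lt : (Fin n → ℕ) → (Fin n → ℕ) → Prop
  trans : ∀ {a b c}, lt a b → lt b c → lt a c
  irrefl : ∀ a, ¬ lt a a
  total : ∀ a b, a ≠ b → lt a b ∨ lt b a
  add_right : ∀ {a b} (c), lt a b → lt (a + c) (b + c)
  zero_lt : ∀ a, a ≠ 0 → lt 0 a

/-- `x i` is multiplicative for `u` w.r.t. `U` under the division induced by `o`:
there is no `v ∈ U` with `v ≺ u` and `deg_i u < deg_i v`. -/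
def IndMult {n : ℕ} (o : AdmissibleOrder n) (U : Finset (Fin n → ℕ))
    (u : Fin n → ℕ) (i : Fin n) : Prop :=
  ¬ ∃ v ∈ U, o.lt v u ∧ u i < v i

/-- `w` is a monomial in the variables satisfying `S`. -/
def InMon {n : ℕ} (S : Fin n → Prop) (w : Fin n → ℕ) : Prop :=
  ∀ i, w i ≠ 0 → S i

/-- `w ∈ u·⟨S⟩`: `w = u * t` with `t` a monomial in variables satisfying `S`. -/
def InCone {n : ℕ} (S : Fin n → Prop) (u w : Fin n → ℕ) : Prop :=
  ∃ t, InMon S t ∧ w = u + t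


private lemma key_b {n : ℕ} (o : AdmissibleOrder n) (U : Finset (Fin n → ℕ))
    {u v w s t : Fin n → ℕ} (hv : v ∈ U) (hlt : o.lt v u)
    (hs : InMon (IndMult o U u) s) (ht : InMon (IndMult o U v) t)
    (hws : w = u + s) (hwt : w = v + t) :
    InCone (IndMult o U v) v u := by
  have heq : ∀ i, u i + s i = v i + t i := by
    intro i
    have := congrFun hws i
    have := congrFun hwt i
    simp [Pi.add_apply] at *
    omega
  have hle : ∀ i, v i ≤ u i := by
    intro i
    by_contra h
    push_neg at h
    have hsi : s i ≠ 0 := by have := heq i; omega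
    exact hs i hsi ⟨v, hv, hlt, h⟩
  refine ⟨fun i => u i - v i, ?_, ?_⟩
  · intro i hi
    simp only at hi
    have hti : t i ≠ 0 := by have := heq i; have := hle i; omega
    exact ht i hti
  · funext i
    have := hle i
    simp [Pi.add_apply]
    omega

/-- The induced division satisfies axioms (a)-(d) of an involutive division. -/
theorem induced_division_is_involutive (n : ℕ) (o : AdmissibleOrder n)
    (U : Finset (Fin n → ℕ)) :
    -- (a) L(u,U) is closed under divisors
    (∀ u ∈ U, ∀ w v : Fin n → ℕ, InMon (IndMult o U u) w → (∀ i, v i ≤ w i) →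
      InMon (IndMult o U u) v) ∧
    -- (b) intersecting involutive cones imply involutive divisibility
    (∀ u ∈ U, ∀ v ∈ U,
      (∃ w, InCone (IndMult o U u) u w ∧ InCone (IndMult o U v) v w) →
      InCone (IndMult o U v) v u ∨ InCone (IndMult o U u) u v) ∧
    -- (c) if v ∈ u·L(u,U) then L(v,U) ⊆ L(u,U)
    (∀ u ∈ U, ∀ v ∈ U, InCone (IndMult o U u) u v →
      ∀ w, InMon (IndMult o U v) w → InMon (IndMult o U u) w) ∧
    -- (d) if V ⊆ U then L(u,U) ⊆ L(u,V) for u ∈ V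
    (∀ V : Finset (Fin n → ℕ), V ⊆ U → ∀ u ∈ V, ∀ w,
      InMon (IndMult o U u) w → InMon (IndMult o V u) w) := by
  refine ⟨?_, ?_, ?_, ?_⟩
  · intro u hu w v hw hle i hvi
    exact hw i (by have := hle i; omega)
  · rintro u hu v hv ⟨w, ⟨s, hs, hws⟩, ⟨t, ht, hwt⟩⟩
    rcases eq_or_ne u v with rfl | hne
    · left
      exact ⟨0, fun i h => absurd rfl h, by simp⟩
    · rcases o.total u v hne with h | h
      · right; exact key_b o U hu h ht hs hwt hws
      · left; exact key_b o U hv h hs ht hws hwt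
  · rintro u hu v hv ⟨t, ht, rfl⟩ w hw i hwi
    rintro ⟨p, hp, hpu, hui⟩
    have hti : t i = 0 := by
      by_contra h
      exact ht i h ⟨p, hp, hpu, hui⟩
    rcases eq_or_ne t 0 with rfl | htne
    · exact hw i hwi ⟨p, hp, by simpa using hpu, by simpa using hui⟩
    · have h1 : o.lt u (u + t) := by
        have := o.add_right u (o.zero_lt t htne)
        simpa [add_comm] using this
      exact hw i hwi ⟨p, hp, o.trans hpu h1, by simp [Pi.add_apply, hti, hui]⟩
  · rintro V hVU u huV w hw i hwi ⟨p, hpV, hpu, hui⟩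
    exact hw i hwi ⟨p, hVU hpV, hpu, hui⟩
end

section
/- Property (b) of an induced division holds with a divisibility conclusion: if u, v ∈ U with u ≻ v and the cones uL_≺(u,U) and vL_≺(v,U) have a common element w, then v divides u and u ∈ vL_≺(v,U). -/
/-- Property (b) for induced division, with divisibility conclusion: if `u ≻ v`
and the involutive cones of `u` and `v` meet, then `v | u` and `u ∈ v·L(v,U)`. -/
theorem induced_division_b_with_divisibility (n : ℕ) (o : AdmissibleOrder n)
    (U : Finset (Fin n → ℕ)) (u v : Fin n → ℕ) (hu : u ∈ U) (hv : v ∈ U)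
    (hlt : o.lt v u) (w : Fin n → ℕ)
    (hwu : InCone (IndMult o U u) u w) (hwv : InCone (IndMult o U v) v w) :
    (∀ i, v i ≤ u i) ∧ InCone (IndMult o U v) v u := by
  obtain ⟨s, hs, hws⟩ := hwu
  obtain ⟨t, ht, hwt⟩ := hwv
  have hle : ∀ i, v i ≤ u i := by
    intro i
    by_contra h
    push_neg at h
    have hsi : s i ≠ 0 := by
      have := congrFun hws i
      have := congrFun hwt i
      simp [Pi.add_apply] at *
      omega
    exact hs i hsi ⟨v, hv, hlt, h⟩
  refine ⟨hle, ?_⟩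
  refine ⟨fun i => u i - v i, ?_, ?_⟩
  · intro i hi
    have hti : t i ≠ 0 := by
      have h1 := congrFun hws i
      have h2 := congrFun hwt i
      simp only [Pi.add_apply] at h1 h2
      have hi' : u i - v i ≠ 0 := hi
      omega
    exact ht i hti
  · funext i
    simp only [Pi.add_apply]
    have := hle i
    omega
end

section
/- Thomas division is an involutive division: the separation where x_i is multiplicative for u ∈ U iff deg_i(u) = max{deg_i(v) : v ∈ U} satisfies axioms (a)–(d) of an involutive division. -/
/-- Thomas division: `x i` is multiplicative for `u` w.r.t. `U` iff
`deg_i u = max {deg_i v : v ∈ U}`. -/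
def ThomasMult {n : ℕ} (U : Finset (Fin n → ℕ)) (u : Fin n → ℕ) (i : Fin n) : Prop :=
  ∀ v ∈ U, v i ≤ u i

/-- Thomas division satisfies axioms (a)-(d) of an involutive division. -/
theorem thomas_division_is_involutive (n : ℕ) (U : Finset (Fin n → ℕ)) :
    -- (a) closed under divisors
    (∀ u ∈ U, ∀ w v : Fin n → ℕ, InMon (ThomasMult U u) w → (∀ i, v i ≤ w i) →
      InMon (ThomasMult U u) v) ∧
    -- (b)
    (∀ u ∈ U, ∀ v ∈ U,
      (∃ w, InCone (ThomasMult U u) u w ∧ InCone (ThomasMult U v) v w) →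
      InCone (ThomasMult U v) v u ∨ InCone (ThomasMult U u) u v) ∧
    -- (c)
    (∀ u ∈ U, ∀ v ∈ U, InCone (ThomasMult U u) u v →
      ∀ w, InMon (ThomasMult U v) w → InMon (ThomasMult U u) w) ∧
    -- (d)
    (∀ V : Finset (Fin n → ℕ), V ⊆ U → ∀ u ∈ V, ∀ w,
      InMon (ThomasMult U u) w → InMon (ThomasMult V u) w) := by
  refine ⟨?_, ?_, ?_, ?_⟩
  · intro u _ w v hw hle i hvi
    exact hw i (fun h => hvi (Nat.le_zero.mp (h ▸ hle i)))
  · intro u hu v hv ⟨w, ⟨t, ht, hwt⟩, ⟨s, hs, hws⟩⟩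
    have huv : u = v := by
      funext i
      have heq : u i + t i = v i + s i := by
        have := congrFun hwt i ▸ congrFun hws i; simpa using this
      rcases lt_trichotomy (u i) (v i) with h | h | h
      · have ht0 : t i ≠ 0 := by omega
        exact absurd (ht i ht0 v hv) (by omega)
      · exact h
      · have hs0 : s i ≠ 0 := by omega
        exact absurd (hs i hs0 u hu) (by omega)
    left
    exact ⟨0, fun i h => absurd rfl h, by simp [huv]⟩
  · intro u hu v hv ⟨t, ht, hvt⟩ w hw i hwi z hz
    have := hw i hwi z hz
    have hvi : v i = u i + t i := congrFun hvt i
    by_cases h0 : t i = 0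
    · omega
    · exact le_trans this (hvi ▸ by have := ht i h0 v hv; omega)
  · intro V hVU u _ w hw i hwi z hz
    exact hw i hwi z (hVU hz)
end

section
/- For any finite monomial set U, any u ∈ U, and any admissible ordering ≻: the Thomas multiplicative variables of u are contained in the Janet multiplicative variables, in the Division I multiplicative variables, and in the induced-division multiplicative variables; i.e., M_T(u,U) ⊆ M_J(u,U), M_T(u,U) ⊆ M_I(u,U), and M_T(u,U) ⊆ M_{D_≻}(u,U). -/
/-- Janet division (variables ordered `x 0 ≻ x 1 ≻ ⋯`). -/
def JanetMult {n : ℕ} (U : Finset (Fin n → ℕ)) (u : Fin n → ℕ) (i : Fin n) : Prop :=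
  ∀ v ∈ U, (∀ j, j < i → v j = u j) → v i ≤ u i

/-- Division I: `x i` is nonmultiplicative for `u` iff some `v ∈ U` makes
`lcm(u,v)/u` a nontrivial product of at most `⌊n/2⌋` distinct variable powers
one of which involves `x i`; `DivIMult` is the negation. -/
def DivIMult {n : ℕ} (U : Finset (Fin n → ℕ)) (u : Fin n → ℕ) (i : Fin n) : Prop :=
  ¬ ∃ v ∈ U, 1 ≤ (Finset.univ.filter fun j => u j < v j).card ∧
      (Finset.univ.filter fun j => u j < v j).card ≤ n / 2 ∧ u i < v i

/-- Thomas multiplicative variables are contained in the Janet, Division I and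
induced-division multiplicative variables. -/
theorem thomas_subset_janet_divI_induced (n : ℕ) (o : AdmissibleOrder n)
    (U : Finset (Fin n → ℕ)) (u : Fin n → ℕ) (hu : u ∈ U) (i : Fin n)
    (h : ThomasMult U u i) :
    JanetMult U u i ∧ DivIMult U u i ∧ IndMult o U u i := by
  refine ⟨fun v hv _ => h v hv, ?_, ?_⟩
  · rintro ⟨v, hv, _, _, hlt⟩
    exact absurd (h v hv) (not_le.mpr hlt)
  · rintro ⟨v, hv, _, hlt⟩
    exact absurd (h v hv) (not_le.mpr hlt)
end

section
/- If a finite monomial set U is autoreduced with respect to Pommaret division (no element lies in the Pommaret cone of another), then for every u ∈ U the Pommaret multiplicative variables of u are contained in the Janet multiplicative variables of u with respect to U. -/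
/-- Pommaret division: `x i` is multiplicative for `u` iff every variable
occurring in `u` has index `≤ i` (variables ordered `x 0 ≻ x 1 ≻ ⋯`). -/
def PomMult {n : ℕ} (u : Fin n → ℕ) (i : Fin n) : Prop :=
  ∀ j, u j ≠ 0 → j ≤ i

/-- If `U` is Pommaret-autoreduced then Pommaret multiplicative variables are
Janet multiplicative. -/
theorem pommaret_subset_janet_of_autoreduced (n : ℕ) (U : Finset (Fin n → ℕ))
    (hauto : ∀ u ∈ U, ∀ v ∈ U, u ≠ v → ¬ InCone (PomMult v) v u) :
    ∀ u ∈ U, ∀ i, PomMult u i → JanetMult U u i := by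
  intro u hu i hPom v hv hlt
  by_contra hgt
  push_neg at hgt
  -- u j = 0 for j > i
  have hu0 : ∀ j, i < j → u j = 0 := by
    intro j hij
    by_contra h
    exact absurd (hPom j h) (not_le.mpr hij)
  have hle : ∀ j, u j ≤ v j := by
    intro j
    rcases lt_trichotomy j i with h | h | h
    · exact (hlt j h).ge
    · subst h; exact hgt.le
    · simp [hu0 j h]
  have hne : v ≠ u := by
    intro h; rw [h] at hgt; exact lt_irrefl _ hgt
  apply hauto v hv u hu hne
  refine ⟨fun j => v j - u j, ?_, ?_⟩
  · intro j hj
    have hj2 : v j - u j ≠ 0 := hj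
    intro k hk
    have hki := hPom k hk
    have hij : i ≤ j := by
      by_contra h
      push_neg at h
      have := hlt j h
      omega
    exact hki.trans hij
  · funext j
    have := hle j
    simp only [Pi.add_apply]
    omega
end

section
/- The induced division is noetherian: every finite monomial set U has a finite L_≺-completion, i.e., a finite L_≺-involutive set Ũ ⊇ U such that every multiple uw of any u ∈ U has an involutive divisor in Ũ. -/
/-- The induced division is noetherian: every finite monomial set has a finite
involutive completion. -/
theorem induced_division_noetherian (n : ℕ) (o : AdmissibleOrder n)
    (U : Finset (Fin n → ℕ)) :
    ∃ V : Finset (Fin n → ℕ), U ⊆ V ∧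
      ∀ u ∈ V, ∀ w : Fin n → ℕ, ∃ v ∈ V, InCone (IndMult o V v) v (u + w) := by
  classical
  set M : Fin n → ℕ := fun i => U.sup (fun u => u i) with hM
  refine ⟨Finset.Icc 0 M, ?_, ?_⟩
  · intro u hu
    rw [Finset.mem_Icc]
    refine ⟨fun i => Nat.zero_le _, fun i => ?_⟩
    exact Finset.le_sup (f := fun u => u i) hu
  · intro u hu w
    set s : Fin n → ℕ := fun i => u i + w i with hs
    refine ⟨fun i => min (s i) (M i), ?_, ?_⟩
    · rw [Finset.mem_Icc]
      exact ⟨fun i => Nat.zero_le _, fun i => min_le_right _ _⟩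
    · refine ⟨fun i => s i - min (s i) (M i), ?_, ?_⟩
      · intro i hi
        intro ⟨v', hv', _, hlt⟩
        rw [Finset.mem_Icc] at hv'
        have h1 : v' i ≤ M i := hv'.2 i
        simp only [hs] at hi hlt
        omega
      · funext i
        simp only [hs, Pi.add_apply]
        omega
end

section
/- The induced division is continuous: for any finite monomial set U and any finite sequence u_1, …, u_k of elements of U such that for each i < k there is a variable x_j nonmultiplicative for u_i (with respect to U) with u_{i+1} an involutive divisor of u_i·x_j, all the elements u_1, …, u_k are pairwise distinct. -/
private lemma exists_min_rel {n : ℕ} (o : AdmissibleOrder n) {ι : Type*}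
    [DecidableEq ι] (s : Finset ι) (hs : s.Nonempty) (g : ι → (Fin n → ℕ)) :
    ∃ q ∈ s, ∀ i ∈ s, ¬ o.lt (g i) (g q) := by
  classical
  induction s using Finset.induction_on with
  | empty => exact absurd hs (by simp)
  | @insert a s ha ih =>
    rcases s.eq_empty_or_nonempty with rfl | hs'
    · refine ⟨a, Finset.mem_insert_self _ _, ?_⟩
      intro i hi
      rcases Finset.mem_insert.mp hi with rfl | hi
      · exact o.irrefl _
      · exact absurd hi (Finset.notMem_empty _)
    · obtain ⟨q, hqs, hq⟩ := ih hs'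
      by_cases hc : o.lt (g a) (g q)
      · refine ⟨a, Finset.mem_insert_self _ _, ?_⟩
        intro i hi
        rcases Finset.mem_insert.mp hi with rfl | hi
        · exact o.irrefl _
        · exact fun hlt => hq i hi (o.trans hlt hc)
      · refine ⟨q, Finset.mem_insert_of_mem hqs, ?_⟩
        intro i hi
        rcases Finset.mem_insert.mp hi with rfl | hi
        · exact hc
        · exact hq i hi

private lemma no_cycle {n : ℕ} (o : AdmissibleOrder n) (U : Finset (Fin n → ℕ))
    (k : ℕ) (u : Fin k → (Fin n → ℕ))
    (hchain : ∀ i : Fin k, ∀ h : i.val + 1 < k, ∃ j : Fin n,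
      ¬ IndMult o U (u i) j ∧
      InCone (IndMult o U (u ⟨i.val + 1, h⟩)) (u ⟨i.val + 1, h⟩)
        (u i + Pi.single j 1))
    (a b : Fin k) (hab : a.val < b.val) (heq : u a = u b) : False := by
  classical
  set m := b.val - a.val with hm_def
  have hm : 0 < m := by omega
  have hbk : b.val < k := b.isLt
  have hcb : ∀ r : ℕ, a.val + r % m < k := by
    intro r
    have := Nat.mod_lt r hm
    omega
  set c : ℕ → Fin k := fun r => ⟨a.val + r % m, hcb r⟩ with hc_def
  have hcval : ∀ r, (c r).val = a.val + r % m := fun _ => rfl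
  have hsucc : ∀ r : ℕ, (r + 1) % m = (r % m + 1) % m := by
    intro r
    conv_lhs => rw [show r + 1 = m * (r / m) + (r % m + 1) by
      have := Nat.div_add_mod r m; omega]
    exact Nat.mul_add_mod _ _ _
  -- the step data, cyclically
  have step : ∀ r : ℕ, ∃ (j : Fin n) (v t : Fin n → ℕ),
      v ∈ U ∧ o.lt v (u (c r)) ∧ u (c r) j < v j ∧
      InMon (IndMult o U (u (c (r + 1)))) t ∧
      u (c r) + Pi.single j 1 = u (c (r + 1)) + t := by
    intro r
    have hrm : r % m < m := Nat.mod_lt r hm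
    have h1 : (c r).val + 1 < k := by rw [hcval]; omega
    obtain ⟨j, hnm, t, htmon, hteq⟩ := hchain (c r) h1
    have hnext : u ⟨(c r).val + 1, h1⟩ = u (c (r + 1)) := by
      by_cases hc2 : r % m + 1 < m
      · have hmod : (r + 1) % m = r % m + 1 := by
          rw [hsucc, Nat.mod_eq_of_lt hc2]
        have e3 : (⟨(c r).val + 1, h1⟩ : Fin k) = c (r + 1) := by
          apply Fin.ext
          show (c r).val + 1 = (c (r + 1)).val
          rw [hcval, hcval, hmod]
          omega
        rw [e3]
      · have hm1 : r % m + 1 = m := by omega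
        have hmod : (r + 1) % m = 0 := by
          rw [hsucc, hm1, Nat.mod_self]
        have e1 : (⟨(c r).val + 1, h1⟩ : Fin k) = b := by
          apply Fin.ext
          show (c r).val + 1 = b.val
          rw [hcval]; omega
        have e2 : c (r + 1) = a := by
          apply Fin.ext
          rw [hcval, hmod]
          omega
        rw [e1, e2, ← heq]
    simp only [IndMult, not_not] at hnm
    obtain ⟨v, hvU, hvlt, hvj⟩ := hnm
    rw [hnext] at htmon hteq
    exact ⟨j, v, t, hvU, hvlt, hvj, htmon, hteq⟩
  choose J V T h1 h2 h3 h4 h5 using step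
  -- minimal element of the cycle
  obtain ⟨qr, hqr_mem, hqmin⟩ := exists_min_rel o (Finset.range m)
    ⟨0, Finset.mem_range.mpr hm⟩ (fun r => u (c r))
  have hqr : qr < m := Finset.mem_range.mp hqr_mem
  have hcmod : ∀ r : ℕ, c (r % m) = c r := by
    intro r
    apply Fin.ext
    rw [hcval, hcval, Nat.mod_eq_of_lt (Nat.mod_lt r hm)]
  have hmin : ∀ r : ℕ, ¬ o.lt (u (c r)) (u (c qr)) := by
    intro r
    have := hqmin (r % m) (Finset.mem_range.mpr (Nat.mod_lt r hm))
    simpa [hcmod r] using this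
  set j' : Fin n := J qr with hj'
  have h3q : u (c qr) j' < V qr j' := h3 qr
  -- the coordinate-j' step equations
  have hstep : ∀ r, u (c r) j' + (Pi.single (J r) 1 : Fin n → ℕ) j'
      = u (c (r + 1)) j' + T r j' := by
    intro r
    have := congrFun (h5 r) j'
    simpa using this
  have hsing : ∀ r, (Pi.single (J r) 1 : Fin n → ℕ) j' ≤ 1 := by
    intro r
    rw [Pi.single_apply]
    split <;> simp
  have hstepq : u (c qr) j' + 1 = u (c (qr + 1)) j' + T qr j' := by
    have := hstep qr
    rwa [hj', Pi.single_eq_same] at this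
  have hdec : ∀ r, u (c (r + 1)) j' < u (c r) j' → T r j' ≠ 0 := by
    intro r hlt h0
    have := hstep r
    rw [h0] at this
    have := hsing r
    omega
  have hper : u (c (qr + m)) j' = u (c qr) j' := by
    have : c (qr + m) = c qr := by
      apply Fin.ext
      rw [hcval, hcval, Nat.add_mod_right]
    rw [this]
  -- find a step with T r j' ≠ 0 landing at j'-coordinate ≤ that of the minimum
  have key : ∃ r, T r j' ≠ 0 ∧ u (c (r + 1)) j' ≤ u (c qr) j' := by
    by_cases h0 : T qr j' = 0
    · have hf1 : u (c (qr + 1)) j' = u (c qr) j' + 1 := by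
        rw [h0] at hstepq; omega
      have hex : ∃ r, 0 < r ∧ u (c (qr + r)) j' ≤ u (c qr) j' :=
        ⟨m, hm, le_of_eq hper⟩
      obtain ⟨hr₀pos, hr₀le⟩ := Nat.find_spec hex
      set r₀ := Nat.find hex with hr₀
      have hr₀ne1 : r₀ ≠ 1 := by
        intro h
        rw [h] at hr₀le
        omega
      have h2r : 2 ≤ r₀ := by omega
      have hnot := Nat.find_min hex (show r₀ - 1 < r₀ by omega)
      have hgt : u (c qr) j' < u (c (qr + (r₀ - 1))) j' := by
        by_contra hle
        exact hnot ⟨by omega, by omega⟩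
      have hre : qr + (r₀ - 1) + 1 = qr + r₀ := by omega
      refine ⟨qr + (r₀ - 1), ?_, ?_⟩
      · apply hdec
        rw [hre]
        omega
      · rw [hre]
        exact hr₀le
    · exact ⟨qr, h0, by omega⟩
  obtain ⟨r, hT, hfle⟩ := key
  have hmult : IndMult o U (u (c (r + 1))) j' := h4 r j' hT
  apply hmult
  refine ⟨V qr, h1 qr, ?_, ?_⟩
  · by_cases he : V qr = u (c (r + 1))
    · exfalso
      have := h3q
      rw [he] at this
      omega
    · rcases o.total _ _ he with hlt | hlt
      · exact hlt
      · -- hlt : u (c (r+1)) ≺ V qr ; combine with V qr ≺ u (c qr) ≤ others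
        exfalso
        exact hmin (r + 1) (o.trans hlt (h2 qr))
  · exact lt_of_le_of_lt hfle h3q

/-- The induced division is continuous: along a chain where each `u (i+1)` is an
involutive divisor of a nonmultiplicative prolongation of `u i`, all elements
are pairwise distinct. -/
theorem induced_division_continuous (n : ℕ) (o : AdmissibleOrder n)
    (U : Finset (Fin n → ℕ)) (k : ℕ) (u : Fin k → (Fin n → ℕ))
    (hU : ∀ i, u i ∈ U)
    (hchain : ∀ i : Fin k, ∀ h : i.val + 1 < k, ∃ j : Fin n,
      ¬ IndMult o U (u i) j ∧
      InCone (IndMult o U (u ⟨i.val + 1, h⟩)) (u ⟨i.val + 1, h⟩)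
        (u i + Pi.single j 1)) :
    Function.Injective u := by
  intro a b hab
  by_contra hne
  rcases Nat.lt_or_ge a.val b.val with h | h
  · exact no_cycle o U k u hchain a b h hab
  · rcases Nat.lt_or_ge b.val a.val with h' | h'
    · exact no_cycle o U k u hchain b a h' hab.symm
    · exact hne (Fin.ext (le_antisymm h' h))
end

section
/- The induced division is constructive: for any finite set U, u ∈ U, and nonmultiplicative variable x_i of u such that u·x_i has no involutive divisor in U and every proper divisor of u·x_i of the form v·x_j (v ∈ U, x_j nonmultiplicative for v) lies in the involutive cone of U, the monomial u·x_i does not lie in wL_≺(w, U ∪ {w}) for any w in the involutive cone ∪_{v∈U} vL_≺(v,U). -/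
/-- The induced division is constructive. -/
theorem induced_division_constructive (n : ℕ) (o : AdmissibleOrder n)
    (U : Finset (Fin n → ℕ)) (u : Fin n → ℕ) (hu : u ∈ U) (i : Fin n)
    (hi : ¬ IndMult o U u i)
    (hnodiv : ∀ v ∈ U, ¬ InCone (IndMult o U v) v (u + Pi.single i 1))
    (hlower : ∀ v ∈ U, ∀ j : Fin n, ¬ IndMult o U v j →
      (∀ m, (v + Pi.single j 1 : Fin n → ℕ) m ≤ (u + Pi.single i 1 : Fin n → ℕ) m) →
      v + Pi.single j 1 ≠ u + Pi.single i 1 →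
      ∃ t ∈ U, InCone (IndMult o U t) t (v + Pi.single j 1)) :
    ∀ w : Fin n → ℕ, (∃ t ∈ U, InCone (IndMult o U t) t w) →
      ¬ InCone (IndMult o (insert w U) w) w (u + Pi.single i 1) := by
  rintro w ⟨t, htU, r, hr, rfl⟩ ⟨s, hs, heq⟩
  have hmon : ¬ InMon (IndMult o U t) (r + s) := fun h =>
    hnodiv t htU ⟨r + s, h, by rw [heq, add_assoc]⟩
  rw [InMon] at hmon
  push_neg at hmon
  obtain ⟨j, hj0, hjnm⟩ := hmon
  have hjnm' : ∃ v ∈ U, o.lt v t ∧ t j < v j := by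
    simpa [IndMult, not_not] using hjnm
  obtain ⟨v, hv, hvt, hvj⟩ := hjnm'
  have hrj : r j = 0 := by
    by_contra h
    exact hjnm (hr j h)
  have hsj : s j ≠ 0 := by
    have h : (r + s) j = s j := by simp [Pi.add_apply, hrj]
    rwa [h] at hj0
  have hvw : o.lt v (t + r) := by
    rcases eq_or_ne r 0 with h0 | h0
    · simpa [h0] using hvt
    · have h1 : o.lt (0 + t) (r + t) := o.add_right t (o.zero_lt r h0)
      have h2 : o.lt t (t + r) := by rwa [zero_add, add_comm] at h1
      exact o.trans hvt h2
  exact hs j hsj ⟨v, Finset.mem_insert_of_mem hv, hvw,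
    by simpa [Pi.add_apply, hrj] using hvj⟩
end

section
/- In the constructivity proof for induced division, the key divisibility fact holds: if u, u_1 ∈ U, v ∈ L_≺(u_1,U), and u·x_i = (u_1 v)·w where w ∈ L_≺(u_1 v, U ∪ {u_1 v}), then w ∈ L_≺(u_1, U); i.e., every variable dividing w is multiplicative for u_1 with respect to U. -/
/-- Key divisibility fact in the constructivity proof: if `v ∈ L(u₁,U)` and
`u·x_i = (u₁ v)·w` with `w ∈ L(u₁ v, U ∪ {u₁ v})`, then `w ∈ L(u₁, U)`. -/
theorem induced_division_constructivity_key (n : ℕ) (o : AdmissibleOrder n)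
    (U : Finset (Fin n → ℕ)) (u u₁ : Fin n → ℕ) (hu : u ∈ U) (hu₁ : u₁ ∈ U)
    (v : Fin n → ℕ) (hv : InMon (IndMult o U u₁) v) (i : Fin n)
    (w : Fin n → ℕ)
    (heq : u + Pi.single i 1 = u₁ + v + w)
    (hw : InMon (IndMult o (insert (u₁ + v) U) (u₁ + v)) w) :
    InMon (IndMult o U u₁) w := by
  intro j hwj
  rintro ⟨s, hsU, hslt, hj⟩
  by_cases hvj : v j = 0
  · -- use hw at j
    refine hw j hwj ⟨s, Finset.mem_insert_of_mem hsU, ?_, ?_⟩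
    · by_cases hv0 : v = 0
      · simpa [hv0] using hslt
      · have h1 : o.lt u₁ (u₁ + v) := by
          have := o.add_right u₁ (o.zero_lt v hv0)
          simpa [add_comm] using this
        exact o.trans hslt h1
    · simpa [Pi.add_apply, hvj] using hj
  · exact hv j hvj ⟨s, hsU, hslt, hj⟩
end

section
/- Thomas division is monotone: for any finite monomial set U, any v ∈ U, and any nonmultiplicative variable x of v, the Thomas separation is unchanged by adjoining the prolongation, i.e., T(u, U) = T(u, U ∪ {v·x}) for all u ∈ U. Consequently, if U is complete up to a monomial w with respect to some admissible ordering ⊏ and v·x ∉ C_T(U), then U ∪ {v·x} is still complete up to w. -/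
/-- `U` is complete up to `w` w.r.t. the ordering `o` for Thomas division. -/
def ThomasComplete {n : ℕ} (o : AdmissibleOrder n) (U : Finset (Fin n → ℕ))
    (w : Fin n → ℕ) : Prop :=
  ∀ u ∈ U, ∀ i : Fin n, ¬ ThomasMult U u i →
    (o.lt (u + Pi.single i 1) w ∨ u + Pi.single i 1 = w) →
    ∃ t ∈ U, InCone (ThomasMult U t) t (u + Pi.single i 1)

/-- Thomas division is monotone: adjoining a nonmultiplicative prolongation
does not change the Thomas separation, and completeness up to `w` is preserved. -/
theorem thomas_division_monotone (n : ℕ) (U : Finset (Fin n → ℕ))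
    (v : Fin n → ℕ) (hv : v ∈ U) (x : Fin n) (hx : ¬ ThomasMult U v x) :
    (∀ u ∈ U, ∀ i : Fin n,
      (ThomasMult U u i ↔ ThomasMult (insert (v + Pi.single x 1) U) u i)) ∧
    ∀ (o : AdmissibleOrder n) (w : Fin n → ℕ), ThomasComplete o U w →
      (¬ ∃ t ∈ U, InCone (ThomasMult U t) t (v + Pi.single x 1)) →
      ThomasComplete o (insert (v + Pi.single x 1) U) w := by

  have key : ∀ u ∈ U, ∀ i : Fin n,
      ThomasMult U u i ↔ ThomasMult (insert (v + Pi.single x 1) U) u i := by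
    intro u hu i
    constructor
    · intro h t ht
      rcases Finset.mem_insert.mp ht with rfl | ht
      · by_cases hix : i = x
        · subst hix
          obtain ⟨s, hs, hsx⟩ : ∃ s ∈ U, v i < s i := by
            by_contra hcon
            push_neg at hcon
            exact hx (fun t' ht' => hcon t' ht')
          have h1 : v i + 1 ≤ s i := hsx
          have h2 : s i ≤ u i := h s hs
          simpa [Pi.single_apply] using le_trans h1 h2
        · have : v i ≤ u i := h v hv
          simpa [Pi.single_apply, Ne.symm hix] using this
      · exact h t ht
    · intro h t ht
      exact h t (Finset.mem_insert_of_mem ht)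
  refine ⟨key, ?_⟩
  intro o w hc hnc u hu i hnmult hle
  rcases Finset.mem_insert.mp hu with rfl | hu
  · exfalso
    apply hnc
    have hne : (Pi.single i 1 : Fin n → ℕ) ≠ 0 := by
      intro h
      have := congrFun h i
      simp at this
    have h1 : o.lt (v + Pi.single x 1) (v + Pi.single x 1 + Pi.single i 1) := by
      have := o.add_right (v + Pi.single x 1) (o.zero_lt _ hne)
      simpa [add_comm] using this
    have hlt : o.lt (v + Pi.single x 1) w ∨ v + Pi.single x 1 = w := by
      rcases hle with h2 | h2
      · exact Or.inl (o.trans h1 h2)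
      · exact Or.inl (h2 ▸ h1)
    exact hc v hv x hx hlt
  · have hnm : ¬ ThomasMult U u i := fun h => hnmult ((key u hu i).mp h)
    obtain ⟨t, htU, s, hs, heq⟩ := hc u hu i hnm hle
    exact ⟨t, Finset.mem_insert_of_mem htU,
      s, fun j hj => (key t htU j).mp (hs j hj), heq⟩
end

section
/- The induced division D_⊏ is monotone for its inducing ordering ⊏: if a finite set U is complete up to w with respect to ⊏ and v·x_j (v ∈ U) is a nonmultiplicative prolongation not lying in the involutive cone C_{D_⊏}(U) (so v·x_j ⊐ w), then U ∪ {v·x_j} is complete up to w with respect to ⊏, and moreover for every monomial t with t ⊏ v·x_j, t has a D_⊏-involutive divisor in U if and only if it has one in U ∪ {v·x_j}. -/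
/-- `m` has an involutive divisor in `U` for the induced division. -/
def HasIndDiv {n : ℕ} (o : AdmissibleOrder n) (U : Finset (Fin n → ℕ))
    (m : Fin n → ℕ) : Prop :=
  ∃ t ∈ U, InCone (IndMult o U t) t m

/-- `U` is complete up to `w` w.r.t. the inducing ordering `o`. -/
def IndComplete {n : ℕ} (o : AdmissibleOrder n) (U : Finset (Fin n → ℕ))
    (w : Fin n → ℕ) : Prop :=
  ∀ u ∈ U, ∀ i : Fin n, ¬ IndMult o U u i →
    (o.lt (u + Pi.single i 1) w ∨ u + Pi.single i 1 = w) →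
    HasIndDiv o U (u + Pi.single i 1)

/-- The induced division is monotone for its inducing ordering: adjoining an
irreducible nonmultiplicative prolongation preserves involutive reducibility
of all lower monomials, and completeness up to `w` is preserved. -/
theorem induced_division_monotone (n : ℕ) (o : AdmissibleOrder n)
    (U : Finset (Fin n → ℕ)) (w : Fin n → ℕ) (hc : IndComplete o U w)
    (v : Fin n → ℕ) (hv : v ∈ U) (j : Fin n) (hj : ¬ IndMult o U v j)
    (hirr : ¬ HasIndDiv o U (v + Pi.single j 1)) :
    (∀ t : Fin n → ℕ, o.lt t (v + Pi.single j 1) →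
      (HasIndDiv o U t ↔ HasIndDiv o (insert (v + Pi.single j 1) U) t)) ∧
    IndComplete o (insert (v + Pi.single j 1) U) w := by
  have hlt_add : ∀ (u s : Fin n → ℕ), s ≠ 0 → o.lt u (u + s) := by
    intro u s hs
    have h := o.add_right u (o.zero_lt s hs)
    simpa [add_comm] using h
  have hsingle : ∀ i : Fin n, (Pi.single i 1 : Fin n → ℕ) ≠ 0 := by
    intro i h
    have := congrFun h i
    simp [Pi.single_eq_same] at this
  have part1 : ∀ t : Fin n → ℕ, o.lt t (v + Pi.single j 1) →
      (HasIndDiv o U t ↔ HasIndDiv o (insert (v + Pi.single j 1) U) t) := by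
    intro t ht
    constructor
    · rintro ⟨u, hu, s, hmon, rfl⟩
      refine ⟨u, Finset.mem_insert_of_mem hu, s, ?_, rfl⟩
      intro i hi
      rintro ⟨v', hv', hlt, hdeg⟩
      rcases Finset.mem_insert.1 hv' with rfl | hv'U
      · have hsne : s ≠ 0 := by
          intro h0; rw [h0] at hi; simp at hi
        have h1 : o.lt (v + Pi.single j 1) (u + s) := o.trans hlt (hlt_add u s hsne)
        exact o.irrefl _ (o.trans h1 ht)
      · exact hmon i hi ⟨v', hv'U, hlt, hdeg⟩
    · rintro ⟨u, hu, s, hmon, rfl⟩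
      rcases Finset.mem_insert.1 hu with rfl | huU
      · by_cases hsne : s = 0
        · rw [hsne] at ht
          simp at ht
          exact absurd ht (o.irrefl _)
        · exact absurd (o.trans (hlt_add _ s hsne) ht) (o.irrefl _)
      · refine ⟨u, huU, s, ?_, rfl⟩
        intro i hi
        rintro ⟨v', hv'U, hlt, hdeg⟩
        exact hmon i hi ⟨v', Finset.mem_insert_of_mem hv'U, hlt, hdeg⟩
  refine ⟨part1, ?_⟩
  have hwp : o.lt w (v + Pi.single j 1) := by
    rcases eq_or_ne w (v + Pi.single j 1) with rfl | hne
    · exact absurd (hc v hv j hj (Or.inr rfl)) hirr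
    rcases o.total w _ hne with h | h
    · exact h
    · exact absurd (hc v hv j hj (Or.inl h)) hirr
  intro u hu i hnm hle
  have hltp : o.lt (u + Pi.single i 1) (v + Pi.single j 1) := by
    rcases hle with h | h
    · exact o.trans h hwp
    · rw [h]; exact hwp
  rcases Finset.mem_insert.1 hu with rfl | huU
  · exact absurd (o.trans (hlt_add _ _ (hsingle i)) hltp) (o.irrefl _)
  · by_cases hmU : IndMult o U u i
    · exfalso
      obtain ⟨v', hv', hlt, hdeg⟩ := not_not.1 hnm
      rcases Finset.mem_insert.1 hv' with rfl | hv'U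
      · exact o.irrefl _ (o.trans (o.trans hlt (hlt_add u _ (hsingle i))) hltp)
      · exact hmU ⟨v', hv'U, hlt, hdeg⟩
    · exact (part1 _ hltp).1 (hc u huU i hmU hle)
end

section
/- Any monomial set is Janet-autoreduced: for any finite monomial set U and distinct u, v ∈ U, the Janet cones uJ(u,U) and vJ(v,U) are disjoint. -/
/-- Key step: if `u` and `v` first differ at `i` with `v i < u i`, and `m` lies in
both cones, we get a contradiction from `v`'s cone. -/
lemma janet_key (n : ℕ) (U : Finset (Fin n → ℕ))
    (u v : Fin n → ℕ) (hu : u ∈ U) (m : Fin n → ℕ)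
    (h2 : InCone (JanetMult U v) v m) (i : Fin n)
    (hlt : v i < u i) (hagree : ∀ j, j < i → u j = v j)
    (hum : u i ≤ m i) : False := by
  obtain ⟨t, ht, htm⟩ := h2
  have hti : t i ≠ 0 := by
    intro h0
    have : m i = v i + t i := by rw [htm]; rfl
    omega
  have hmult : JanetMult U v i := ht i hti
  have := hmult u hu (fun j hj => hagree j hj)
  omega

/-- Any monomial set is Janet-autoreduced: Janet cones of distinct elements are
disjoint. -/
theorem janet_autoreduced (n : ℕ) (U : Finset (Fin n → ℕ))
    (u v : Fin n → ℕ) (hu : u ∈ U) (hv : v ∈ U) (huv : u ≠ v) (m : Fin n → ℕ) :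
    ¬ (InCone (JanetMult U u) u m ∧ InCone (JanetMult U v) v m) := by
  rintro ⟨h1, h2⟩
  -- find least index where u and v differ
  have hne : ∃ i, u i ≠ v i := by
    by_contra h
    push_neg at h
    exact huv (funext h)
  classical
  let S : Finset (Fin n) := Finset.univ.filter (fun i => u i ≠ v i)
  have hSne : S.Nonempty := by
    obtain ⟨i, hi⟩ := hne
    exact ⟨i, by simp [S, hi]⟩
  set i := S.min' hSne with hi
  have hiS : i ∈ S := S.min'_mem hSne
  have hidiff : u i ≠ v i := by simpa [S] using hiS
  have hagree : ∀ j, j < i → u j = v j := by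
    intro j hj
    by_contra h
    have : j ∈ S := by simp [S, h]
    exact absurd (S.min'_le j this) (not_le.mpr hj)
  obtain ⟨s, hs, hsm⟩ := h1
  obtain ⟨t, ht, htm⟩ := h2
  have hum : u i ≤ m i := by rw [hsm]; simp [Pi.add_apply]
  have hvm : v i ≤ m i := by rw [htm]; simp [Pi.add_apply]
  rcases lt_or_gt_of_ne hidiff with h | h
  · exact janet_key n U v u hv m ⟨s, hs, hsm⟩ i h (fun j hj => (hagree j hj).symm) hvm
  · exact janet_key n U u v hu m ⟨t, ht, htm⟩ i h hagree hum
end
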